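/- Core networked dissipation inequality of Theorem 3 (Eq. (19)): Let N, L, m be positive integers, Q an N × L real matrix (the incidence matrix of the network), and for each node i ∈ {1,…,N} let ε_i > 0, let y_i : ℝ → ℝ^m be a differentiable curve (the node output trajectory) and V_{pi} : ℝ → ℝ differentiable (node storage along the trajectory). For each edge l ∈ {1,…,L} let ζ_l : ℝ → ℝ^m be differentiable (state-dependent part of the edge-controller output), V_{cl} : ℝ → ℝ differentiable, and g_{l,1},…,g_{l,m} : ℝ → ℝ continuous (channel-wise edge feedthrough). Define the edge inputs ŷ_l(t) = Σ_{i=1}^N Q_{il} y_i(t), the edge outputs y_{cl}(t) = ζ_l(t) + (g_{l,1}(ŷ_{l,1}(t)),…,g_{l,m}(ŷ_{l,m}(t))), and the node inputs u_{pi}(t) = Σ_{l=1}^L Q_{il} y_{cl}(t). Assume for all t: V_{pi}'(t) ≤ ⟨u_{pi}(t), y_i'(t)⟩ − ε_i‖y_i'(t)‖² for every node i (OSNI nodes) and V_{cl}'(t) ≤ ⟨ŷ_l(t), ζ_l'(t)⟩ for every edge l (NI edges). Then, with ε_min = min_i ε_i > 0, the function Ŵ(t) = Σ_i V_{pi}(t)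 + Σ_l V_{cl}(t) − Σ_l ⟨ŷ_l(t), ζ_l(t)⟩ − Σ_l Σ_{k=1}^m ∫_0^{ŷ_{l,k}(t)} g_{l,k}(ξ) dξ is differentiable at every t and satisfies Ŵ'(t) ≤ −ε_min Σ_{i=1}^N ‖y_i'(t)‖² ≤ 0. -/

import Mathlib

/-!
Differentiating `Ŵ` term by term, the node inequalities contribute `Σᵢ ⟪u_{pi}, yᵢ'⟫ - Σᵢ εᵢ ‖yᵢ'‖²`
and the edge inequalities `Σₗ ⟪ŷₗ, ζₗ'⟫`. Because `Q` enters both the edge inputs and the node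
inputs, the power delivered to the nodes equals the power `Σₗ ⟪y_{cl}, ŷₗ'⟫` drawn from the edges,
which is exactly what the derivatives of the cross terms `⟪ŷₗ, ζₗ⟫` and of the feedthrough
integrals `∫₀^{ŷ_{l,k}} g_{l,k}` cancel. Only `-Σᵢ εᵢ ‖yᵢ'‖² ≤ -ε_min Σᵢ ‖yᵢ'‖²` survives.
-/

open scoped RealInnerProductSpace

section Incidence

variable {ι κ E : Type*} [Fintype ι] [Fintype κ] [NormedAddCommGroup E] [InnerProductSpace ℝ E]

theorem sum_inner_sum_smul_comm (Q : ι → κ → ℝ) (a : κ → E) (b : ι → E) :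
    ∑ i, ⟪∑ l, Q i l • a l, b i⟫ = ∑ l, ⟪a l, ∑ i, Q i l • b i⟫ := by
  simp only [sum_inner, inner_sum, real_inner_smul_left, real_inner_smul_right]
  exact Finset.sum_comm

end Incidence

theorem EuclideanSpace.inner_eq_sum_mul {m : ℕ} (x y : EuclideanSpace ℝ (Fin m)) :
    ⟪x, y⟫ = ∑ k, x k * y k := by
  simp [PiLp.inner_apply, mul_comm]

theorem inner_eq_inner_add_sum_mul_of_apply_eq_add {m : ℕ} {a b v x : EuclideanSpace ℝ (Fin m)}
    {g : Fin m → ℝ → ℝ} (h : ∀ k, a k = b k + g k (x k)) :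
    ⟪a, v⟫ = ⟪v, b⟫ + ∑ k, g k (x k) * v k := by
  simp only [EuclideanSpace.inner_eq_sum_mul, h, add_mul, Finset.sum_add_distrib, mul_comm (v _)]

theorem HasDerivAt.intervalIntegral_comp {g : ℝ → ℝ} (hg : Continuous g) {u : ℝ → ℝ} {u' t : ℝ}
    (hu : HasDerivAt u u' t) :
    HasDerivAt (fun s => ∫ ξ in (0 : ℝ)..u s, g ξ) (g (u t) * u') t :=
  (hg.integral_hasStrictDerivAt 0 (u t)).hasDerivAt.comp t hu

theorem HasDerivAt.sum_intervalIntegral_apply {m : ℕ} {g : Fin m → ℝ → ℝ}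
    (hg : ∀ k, Continuous (g k)) {x : ℝ → EuclideanSpace ℝ (Fin m)}
    {x' : EuclideanSpace ℝ (Fin m)} {t : ℝ} (hx : HasDerivAt x x' t) :
    HasDerivAt (fun s => ∑ k, ∫ ξ in (0 : ℝ)..x s k, g k ξ) (∑ k, g k (x t k) * x' k) t :=
  HasDerivAt.fun_sum fun k _ =>
    ((EuclideanSpace.proj (𝕜 := ℝ) k).hasFDerivAt.comp_hasDerivAt t hx).intervalIntegral_comp
      (hg k)

theorem stmt_2_general (N L m : ℕ) (hN : 0 < N)
    (Q : Matrix (Fin N) (Fin L) ℝ)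
    (ε : Fin N → ℝ) (hε : ∀ i, 0 < ε i)
    (y y' : Fin N → ℝ → EuclideanSpace ℝ (Fin m))
    (hy : ∀ i t, HasDerivAt (y i) (y' i t) t)
    (Vp Vp' : Fin N → ℝ → ℝ)
    (hVp : ∀ i t, HasDerivAt (Vp i) (Vp' i t) t)
    (ζ ζ' : Fin L → ℝ → EuclideanSpace ℝ (Fin m))
    (hζ : ∀ l t, HasDerivAt (ζ l) (ζ' l t) t)
    (Vc Vc' : Fin L → ℝ → ℝ)
    (hVc : ∀ l t, HasDerivAt (Vc l) (Vc' l t) t)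
    (g : Fin L → Fin m → ℝ → ℝ) (hg : ∀ l k, Continuous (g l k))
    (yhat : Fin L → ℝ → EuclideanSpace ℝ (Fin m))
    (hyhat : ∀ l t, yhat l t = ∑ i : Fin N, Q i l • y i t)
    (yc : Fin L → ℝ → EuclideanSpace ℝ (Fin m))
    (hyc : ∀ l t k, yc l t k = ζ l t k + g l k (yhat l t k))
    (up : Fin N → ℝ → EuclideanSpace ℝ (Fin m))
    (hup : ∀ i t, up i t = ∑ l : Fin L, Q i l • yc l t)
    (hOSNI : ∀ i t, Vp' i t ≤ ⟪up i t, y' i t⟫ - ε i * ‖y' i t‖ ^ 2)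
    (hNI : ∀ l t, Vc' l t ≤ ⟪yhat l t, ζ' l t⟫)
    (εmin : ℝ)
    (hεmin : εmin = Finset.univ.inf' (Finset.univ_nonempty_iff.mpr ⟨⟨0, hN⟩⟩) ε) :
    0 < εmin ∧
    ∀ t : ℝ, ∃ w : ℝ,
      HasDerivAt
        (fun s => (∑ i : Fin N, Vp i s) + (∑ l : Fin L, Vc l s)
          - (∑ l : Fin L, ⟪yhat l s, ζ l s⟫)
          - ∑ l : Fin L, ∑ k : Fin m, ∫ ξ in (0:ℝ)..(yhat l s k), g l k ξ) w t ∧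
      w ≤ -εmin * ∑ i : Fin N, ‖y' i t‖ ^ 2 ∧
      -εmin * ∑ i : Fin N, ‖y' i t‖ ^ 2 ≤ 0 := by
  have hεmin_pos : 0 < εmin := hεmin ▸ (Finset.lt_inf'_iff _).mpr fun i _ => hε i
  have hεmin_le (i : Fin N) : εmin ≤ ε i := hεmin ▸ Finset.inf'_le _ (Finset.mem_univ i)
  refine ⟨hεmin_pos, fun t => ?_⟩
  set yhat' : Fin L → EuclideanSpace ℝ (Fin m) := fun l => ∑ i, Q i l • y' i t
  have hyhat_deriv (l : Fin L) : HasDerivAt (yhat l) (yhat' l) t := by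
    rw [show yhat l = fun s => ∑ i, Q i l • y i s from funext (hyhat l)]
    exact HasDerivAt.fun_sum fun i _ => (hy i t).const_smul (Q i l)
  have hpower : ∑ i, ⟪up i t, y' i t⟫
      = ∑ l, (⟪yhat' l, ζ l t⟫ + ∑ k, g l k (yhat l t k) * yhat' l k) := by
    simp only [hup]
    refine (sum_inner_sum_smul_comm (fun i l => Q i l) _ _).trans ?_
    exact Finset.sum_congr rfl fun l _ => inner_eq_inner_add_sum_mul_of_apply_eq_add (hyc l t)
  refine ⟨_, (((HasDerivAt.fun_sum fun i _ => hVp i t).add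
    (HasDerivAt.fun_sum fun l _ => hVc l t)).sub
    (HasDerivAt.fun_sum fun l _ => (hyhat_deriv l).inner ℝ (hζ l t))).sub
    (HasDerivAt.fun_sum fun l _ => (hyhat_deriv l).sum_intervalIntegral_apply (hg l)), ?_, ?_⟩
  · have hnodes : ∑ i, Vp' i t ≤ ∑ i, (⟪up i t, y' i t⟫ - ε i * ‖y' i t‖ ^ 2) :=
      Finset.sum_le_sum fun i _ => hOSNI i t
    have hedges : ∑ l, Vc' l t ≤ ∑ l, ⟪yhat l t, ζ' l t⟫ :=
      Finset.sum_le_sum fun l _ => hNI l t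
    have hdamping : ∑ i, εmin * ‖y' i t‖ ^ 2 ≤ ∑ i, ε i * ‖y' i t‖ ^ 2 :=
      Finset.sum_le_sum fun i _ => mul_le_mul_of_nonneg_right (hεmin_le i) (sq_nonneg _)
    simp only [Finset.sum_sub_distrib, Finset.sum_add_distrib, ← Finset.mul_sum]
      at hnodes hdamping hpower ⊢
    linarith
  · exact mul_nonpos_of_nonpos_of_nonneg (neg_nonpos.mpr hεmin_pos.le)
      (Finset.sum_nonneg fun i _ => sq_nonneg _)

/-- Core networked dissipation inequality of Theorem 3 (Eq. (19)):
OSNI node plants with NI edge controllers interconnected through the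
incidence matrix `Q`. -/
theorem stmt_2 (N L m : ℕ) (hN : 0 < N) (hL : 0 < L) (hm : 0 < m)
    (Q : Matrix (Fin N) (Fin L) ℝ)
    (ε : Fin N → ℝ) (hε : ∀ i, 0 < ε i)
    (y y' : Fin N → ℝ → EuclideanSpace ℝ (Fin m))
    (hy : ∀ i t, HasDerivAt (y i) (y' i t) t)
    (Vp Vp' : Fin N → ℝ → ℝ)
    (hVp : ∀ i t, HasDerivAt (Vp i) (Vp' i t) t)
    (ζ ζ' : Fin L → ℝ → EuclideanSpace ℝ (Fin m))
    (hζ : ∀ l t, HasDerivAt (ζ l) (ζ' l t) t)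
    (Vc Vc' : Fin L → ℝ → ℝ)
    (hVc : ∀ l t, HasDerivAt (Vc l) (Vc' l t) t)
    (g : Fin L → Fin m → ℝ → ℝ) (hg : ∀ l k, Continuous (g l k))
    (yhat : Fin L → ℝ → EuclideanSpace ℝ (Fin m))
    (hyhat : ∀ l t, yhat l t = ∑ i : Fin N, Q i l • y i t)
    (yc : Fin L → ℝ → EuclideanSpace ℝ (Fin m))
    (hyc : ∀ l t k, yc l t k = ζ l t k + g l k (yhat l t k))
    (up : Fin N → ℝ → EuclideanSpace ℝ (Fin m))
    (hup : ∀ i t, up i t = ∑ l : Fin L, Q i l • yc l t)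
    (hOSNI : ∀ i t, Vp' i t ≤ ⟪up i t, y' i t⟫ - ε i * ‖y' i t‖ ^ 2)
    (hNI : ∀ l t, Vc' l t ≤ ⟪yhat l t, ζ' l t⟫)
    (εmin : ℝ)
    (hεmin : εmin = Finset.univ.inf' (Finset.univ_nonempty_iff.mpr ⟨⟨0, hN⟩⟩) ε) :
    0 < εmin ∧
    ∀ t : ℝ, ∃ w : ℝ,
      HasDerivAt
        (fun s => (∑ i : Fin N, Vp i s) + (∑ l : Fin L, Vc l s)
          - (∑ l : Fin L, ⟪yhat l s, ζ l s⟫)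
          - ∑ l : Fin L, ∑ k : Fin m, ∫ ξ in (0:ℝ)..(yhat l s k), g l k ξ) w t ∧
      w ≤ -εmin * ∑ i : Fin N, ‖y' i t‖ ^ 2 ∧
      -εmin * ∑ i : Fin N, ‖y' i t‖ ^ 2 ≤ 0 :=
  stmt_2_general N L m hN Q ε hε y y' hy Vp Vp' hVp ζ ζ' hζ Vc Vc' hVc g hg yhat hyhat yc hyc up hup
    hOSNI hNI εmin hεmin
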